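/- Let f : X → Y be a proper continuous map of topological spaces where X is a finite-dimensional real vector space with its scaling contraction, Y has a contraction H onto a point y₀ ∈ Y, and f is equivariant: f(t·x) = H(t, f(x)) for all t ∈ [0,1], x ∈ X. If f⁻¹(y₀) is finite, then f⁻¹(y₀) consists of a single point, namely 0. -/
import Mathlib

open unitInterval

/-- Let `f : V → Y` be a proper continuous map from a finite-dimensional real vector
space with its scaling contraction to a space `Y` with a contraction `H` onto `y₀`
fixing `y₀`, equivariantly: `f(t • x) = H(t, f x)`.  If the fiber `f⁻¹(y₀)` is finite,
then it is the single point `0`. -/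
theorem central_fiber_is_origin
    {V Y : Type} [NormedAddCommGroup V] [NormedSpace ℝ V] [FiniteDimensional ℝ V]
    [TopologicalSpace Y]
    (f : C(V, Y)) (hf : IsProperMap ⇑f) (y₀ : Y)
    (H : C(unitInterval × Y, Y))
    (h1 : ∀ y : Y, H (1, y) = y)
    (h0 : ∀ y : Y, H (0, y) = y₀)
    (hfix : ∀ t : unitInterval, H (t, y₀) = y₀)
    (hequiv : ∀ (t : unitInterval) (x : V), f ((t : ℝ) • x) = H (t, f x))
    (hfin : (⇑f ⁻¹' {y₀}).Finite) :
    ⇑f ⁻¹' {y₀} = {0} := by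
  have h0mem : f 0 = y₀ := by
    have := hequiv 0 0
    simpa [h0] using this
  ext x
  simp only [Set.mem_preimage, Set.mem_singleton_iff]
  constructor
  · intro hx
    by_contra hx0
    -- the segment from 0 to x lies in the fiber and is infinite
    have hseg : ∀ t : unitInterval, f ((t : ℝ) • x) = y₀ := by
      intro t
      rw [hequiv t x, hx, hfix]
    have hinj : Function.Injective (fun t : unitInterval => (t : ℝ) • x) := by
      intro s t hst
      have : (s : ℝ) • x = (t : ℝ) • x := hst
      have h' : ((s : ℝ) - t) • x = 0 := by rw [sub_smul, this, sub_self]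
      rcases smul_eq_zero.mp h' with h | h
      · exact Subtype.ext (by linarith [sub_eq_zero.mp (by exact_mod_cast h)])
      · exact absurd h hx0
    haveI : Infinite unitInterval :=
      Set.Icc.infinite (by norm_num)
    exact Set.infinite_of_injective_forall_mem hinj (fun t => hseg t) hfin
  · rintro rfl
    exact h0mem
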